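/- arXiv:2202.04282 — 2 statements merged into one kernel-verified Lean document; each statement's English description precedes it below -/
import Mathlib

section
/- Let L be an irreducible linear order of finite Hausdorff rank r with 1 ≤ r, and suppose L ≅ ω ×ₗ L' (resp. ω* ×ₗ L'). Then the (r−1)-th Hausdorff derivative L^(r−1) is order-isomorphic to ω (resp. ω*). -/
section HausdorffDerivative

variable {M : Type} [LinearOrder M]

/-- `x ∼₁ y` iff the closed interval between `x` and `y` is finite. -/
def sim1 (x y : M) : Prop := (Set.uIcc x y).Finite

theorem sim1_refl (x : M) : sim1 x x := by simp [sim1]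

theorem sim1_symm {x y : M} (h : sim1 x y) : sim1 y x := by
  rwa [sim1, Set.uIcc_comm]

theorem sim1_trans {x y z : M} (h1 : sim1 x y) (h2 : sim1 y z) : sim1 x z :=
  Set.Finite.subset (h1.union h2) (Set.uIcc_subset_uIcc_union_uIcc)

/-- The setoid of `∼₁`-equivalence. -/
def sim1Setoid (M : Type) [LinearOrder M] : Setoid M :=
  ⟨sim1, ⟨sim1_refl, sim1_symm, sim1_trans⟩⟩

/-- The first Hausdorff derivative `M^(1)`: the linear order of `∼₁`-classes. -/
def HDeriv (M : Type) [LinearOrder M] : Type := Quotient (sim1Setoid M)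

theorem sim1_le_congr {x x' y y' : M} (hx : sim1 x x') (hy : sim1 y y')
    (h : x ≤ y ∨ sim1 x y) : x' ≤ y' ∨ sim1 x' y' := by
  by_cases hxy' : sim1 x' y'
  · exact Or.inr hxy'
  rcases h with h | h
  · left
    by_contra hlt
    push_neg at hlt
    apply hxy' (sim1_symm _)
    have hsub : Set.uIcc y' x' ⊆ Set.uIcc y' y ∪ Set.uIcc x x' := by
      intro z hz
      rw [Set.uIcc_of_le hlt.le, Set.mem_Icc] at hz
      rcases le_or_gt z y with hzy | hzy
      · exact Or.inl (Set.mem_uIcc.2 (Or.inl ⟨hz.1, hzy⟩))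
      · exact Or.inr (Set.mem_uIcc.2 (Or.inl ⟨(h.trans hzy.le), hz.2⟩))
    exact Set.Finite.subset ((sim1_symm hy).union hx) hsub
  · exact absurd (sim1_trans (sim1_trans (sim1_symm hx) h) hy) hxy'

/-- The induced order on `∼₁`-classes. -/
def HDeriv.le : HDeriv M → HDeriv M → Prop :=
  Quotient.lift₂ (fun x y => x ≤ y ∨ sim1 x y)
    (fun _ _ _ _ ha hb => propext
      ⟨sim1_le_congr ha hb, sim1_le_congr (sim1_symm ha) (sim1_symm hb)⟩)

noncomputable instance HDeriv.instLinearOrder : LinearOrder (HDeriv M) where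
  le := HDeriv.le
  le_refl := by rintro ⟨x⟩; exact Or.inl le_rfl
  le_trans := by
    rintro ⟨x⟩ ⟨y⟩ ⟨z⟩ (h1 | h1) (h2 | h2)
    · exact Or.inl (h1.trans h2)
    · rcases le_or_gt x z with h | h
      · exact Or.inl h
      · exact Or.inr (sim1_symm (Set.Finite.subset h2
          (by rw [Set.uIcc_of_le h.le, Set.uIcc_of_ge (h.le.trans h1)]
              exact Set.Icc_subset_Icc le_rfl h1)))
    · rcases le_or_gt x z with h | h
      · exact Or.inl h
      · exact Or.inr (Set.Finite.subset h1
          (by rw [Set.uIcc_of_ge h.le, Set.uIcc_of_ge (h2.trans h.le)]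
              exact Set.Icc_subset_Icc h2 le_rfl))
    · exact Or.inr (sim1_trans h1 h2)
  le_antisymm := by
    rintro ⟨x⟩ ⟨y⟩ (h1 | h1) (h2 | h2)
    · exact Quotient.sound (le_antisymm h1 h2 ▸ sim1_refl x)
    · exact Quotient.sound (sim1_symm h2)
    · exact Quotient.sound h1
    · exact Quotient.sound h1
  le_total := by
    rintro ⟨x⟩ ⟨y⟩
    rcases le_total x y with h | h
    · exact Or.inl (Or.inl h)
    · exact Or.inr (Or.inl h)
  toDecidableLE := Classical.decRel _

end HausdorffDerivative
section IterDeriv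

/-- Auxiliary: the `n`-th iterated Hausdorff derivative together with its order. -/
noncomputable def IterDerivAux (M : Type) (i : LinearOrder M) : ℕ → (T : Type) × LinearOrder T
  | 0 => ⟨M, i⟩
  | n + 1 => ⟨@HDeriv (IterDerivAux M i n).1 (IterDerivAux M i n).2,
      @HDeriv.instLinearOrder (IterDerivAux M i n).1 (IterDerivAux M i n).2⟩

/-- The `n`-th iterated Hausdorff derivative `M^(n)`. -/
noncomputable def IterDeriv (M : Type) [i : LinearOrder M] (n : ℕ) : Type :=
  (IterDerivAux M i n).1

noncomputable instance (M : Type) [i : LinearOrder M] (n : ℕ) : LinearOrder (IterDeriv M n) :=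
  (IterDerivAux M i n).2

/-- The (finite) Hausdorff rank: the least `n` such that `M^(n)` is finite. -/
noncomputable def hrank (M : Type) [LinearOrder M] : ℕ :=
  sInf {n : ℕ | Finite (IterDeriv M n)}

end IterDeriv

/-!
The ω* case is the dual of the ω case, since `(Mᵒᵈ)^(n) ≃o (M^(n))ᵒᵈ` and
`(ℕᵒᵈ ×ₗ L')ᵒᵈ ≃o ℕ ×ₗ L'ᵒᵈ`. In the ω case the shift `f : (n, x) ↦ (n + 1, x)` of `ℕ ×ₗ L'`
descends to every derivative `L^(k)` with at least two points. On `M := L^(r-1)`, whose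
derivative is finite, the maximal `∼₁`-class is an upper set, and a class that is an upper set
absorbs everything along the shift; so `M` is a single class, i.e. locally finite. A point `u`
outside the range of some iterate `f^[n]` has finitely many predecessors, as `f^[n]` maps them
into `[u, f^[n] u]`. So `M` has a least element and no largest one, hence `M ≃o ℕ`.
-/

variable {M N : Type} [LinearOrder M] [LinearOrder N]

open Set

theorem sim1_apply_iff {f : M → N} (hf : StrictMono f) (hr : (range f).OrdConnected) {a b : M} :
    sim1 (f a) (f b) ↔ sim1 a b := by
  have himage : f '' uIcc a b = uIcc (f a) (f b) := by
    have hpre : f ⁻¹' uIcc (f a) (f b) = uIcc a b :=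
      (OrderEmbedding.ofStrictMono f hf).preimage_uIcc a b
    rw [← hpre, image_preimage_eq_inter_range, inter_eq_left.2 (hr.uIcc_subset ⟨_, rfl⟩ ⟨_, rfl⟩)]
  rw [sim1, sim1, ← himage, finite_image_iff hf.injective.injOn]

theorem sim1_toDual_iff {a b : M} : sim1 (OrderDual.toDual a) (OrderDual.toDual b) ↔ sim1 a b := by
  rw [sim1, sim1, uIcc_toDual]
  rfl

theorem OrderIso.ordConnected_range (e : M ≃o N) : (range e).OrdConnected :=
  e.range_eq ▸ ordConnected_univ

namespace HDeriv

def mk (x : M) : HDeriv M := Quotient.mk (sim1Setoid M) x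

theorem mk_surjective : Function.Surjective (mk : M → HDeriv M) := Quotient.exists_rep

theorem mk_le_mk {x y : M} : mk x ≤ mk y ↔ x ≤ y ∨ sim1 x y := Iff.rfl

theorem mk_eq_mk {x y : M} : mk x = mk y ↔ sim1 x y := Quotient.eq

theorem mk_monotone : Monotone (mk : M → HDeriv M) := fun _ _ h => Or.inl h

def map (f : M → N) (hf : StrictMono f) (hr : (range f).OrdConnected) : HDeriv M → HDeriv N :=
  Quotient.map f fun _ _ => (sim1_apply_iff hf hr).2

section map

variable {f : M → N} (hf : StrictMono f) (hr : (range f).OrdConnected)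

theorem map_le_map_iff {p q : HDeriv M} : map f hf hr p ≤ map f hf hr q ↔ p ≤ q := by
  obtain ⟨x, rfl⟩ := mk_surjective p
  obtain ⟨y, rfl⟩ := mk_surjective q
  exact or_congr hf.le_iff_le (sim1_apply_iff hf hr)

theorem strictMono_map : StrictMono (map f hf hr) :=
  strictMono_of_le_iff_le fun _ _ => (map_le_map_iff hf hr).symm

end map

theorem map_iterate_mk {f : M → M} (hf : StrictMono f) (hr : (range f).OrdConnected) (n : ℕ)
    (x : M) : (map f hf hr)^[n] (mk x) = mk (f^[n] x) :=
  (Function.Semiconj.iterate_right (f := mk) (gb := map f hf hr) (fun _ => rfl) n x).symm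

def congr (e : M ≃o N) : HDeriv M ≃o HDeriv N where
  toFun := map e e.strictMono e.ordConnected_range
  invFun := map e.symm e.symm.strictMono e.symm.ordConnected_range
  left_inv p := by
    obtain ⟨x, rfl⟩ := mk_surjective p
    exact congrArg mk (e.symm_apply_apply x)
  right_inv p := by
    obtain ⟨x, rfl⟩ := mk_surjective p
    exact congrArg mk (e.apply_symm_apply x)
  map_rel_iff' := map_le_map_iff e.strictMono e.ordConnected_range

def dualIso (M : Type) [LinearOrder M] : HDeriv Mᵒᵈ ≃o (HDeriv M)ᵒᵈ where
  toFun := Quotient.map OrderDual.ofDual fun a b =>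
    (sim1_toDual_iff (a := a.ofDual) (b := b.ofDual)).1
  invFun := Quotient.map OrderDual.toDual fun _ _ => sim1_toDual_iff.2
  left_inv p := by
    obtain ⟨x, rfl⟩ := mk_surjective p
    rfl
  right_inv p := by
    obtain ⟨x, rfl⟩ := mk_surjective p
    rfl
  map_rel_iff' {p q} := by
    obtain ⟨x, rfl⟩ := mk_surjective p
    obtain ⟨y, rfl⟩ := mk_surjective q
    exact or_congr Iff.rfl
      ⟨fun h => sim1_symm (sim1_toDual_iff.1 h), fun h => sim1_toDual_iff.2 (sim1_symm h)⟩

end HDeriv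

noncomputable def IterDeriv.dualIso (M : Type) [LinearOrder M] :
    (n : ℕ) → IterDeriv Mᵒᵈ n ≃o (IterDeriv M n)ᵒᵈ
  | 0 => OrderIso.refl _
  | n + 1 => (HDeriv.congr (IterDeriv.dualIso M n)).trans (HDeriv.dualIso (IterDeriv M n))

/-- An abstraction of the shift `(n, x) ↦ (n + 1, x)` of `ℕ ×ₗ K` which, unlike the product
decomposition itself, descends to the Hausdorff derivative. -/
structure OmegaShift (M : Type) [LinearOrder M] where
  f : M → M
  strictMono : StrictMono f
  isUpperSet_range : IsUpperSet (range f)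
  le_apply : ∀ x, x ≤ f x
  exists_le_iterate : ∀ x y, ∃ n, y ≤ f^[n] x
  exists_notMem_range_iterate : ∀ y, ∃ n, y ∉ range f^[n]

namespace OmegaShift

theorem le_iterate (S : OmegaShift M) (n : ℕ) (x : M) : x ≤ S.f^[n] x :=
  Function.id_le_iterate_of_id_le S.le_apply n x

theorem isUpperSet_image (S : OmegaShift M) {U : Set M} (hU : IsUpperSet U) :
    IsUpperSet (S.f '' U) := by
  rintro _ z hz ⟨u, hu, rfl⟩
  obtain ⟨w, rfl⟩ := S.isUpperSet_range hz ⟨u, rfl⟩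
  exact ⟨w, hU (S.strictMono.le_iff_le.1 hz) hu, rfl⟩

theorem isUpperSet_range_iterate (S : OmegaShift M) (n : ℕ) : IsUpperSet (range S.f^[n]) := by
  induction n with
  | zero => simpa using isUpperSet_univ
  | succ n ih => simpa only [Function.iterate_succ', range_comp] using S.isUpperSet_image ih

theorem noMaxOrder (S : OmegaShift M) : NoMaxOrder M where
  exists_gt x := by
    obtain ⟨n, hn⟩ := S.exists_notMem_range_iterate x
    exact ⟨_, (S.le_iterate n x).lt_of_ne fun h => hn ⟨x, h.symm⟩⟩

theorem mk_eq_of_isUpperSet (S : OmegaShift M) {q : HDeriv M}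
    (hq : IsUpperSet {x | HDeriv.mk x = q}) (x : M) : HDeriv.mk x = q := by
  have hf : StrictMono (HDeriv.map S.f S.strictMono S.isUpperSet_range.ordConnected) :=
    HDeriv.strictMono_map _ _
  -- `f x` and `f (f x)` both lie in `q`, and `HDeriv.map f` is injective.
  have hstep : ∀ x, HDeriv.mk (S.f x) = q → HDeriv.mk x = q := fun x hx =>
    ((hf.injective.eq_iff (a := HDeriv.mk (S.f x)) (b := HDeriv.mk x)).1
      ((hq (S.le_apply _) hx).trans hx.symm)).symm.trans hx
  have hiter : ∀ n x, HDeriv.mk (S.f^[n] x) = q → HDeriv.mk x = q := by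
    intro n
    induction n with
    | zero => exact fun _ => id
    | succ n ih => exact fun x hx => ih x (hstep _ (by rwa [← Function.iterate_succ_apply' S.f]))
  obtain ⟨y, rfl⟩ := HDeriv.mk_surjective q
  obtain ⟨n, hn⟩ := S.exists_le_iterate x y
  exact hiter n x (hq hn rfl)

theorem exists_forall_lt_of_mk_eq (S : OmegaShift M) [Nontrivial (HDeriv M)] (q : HDeriv M) :
    ∃ w, ∀ c, HDeriv.mk c = q → c < w := by
  by_contra! h
  obtain ⟨p, hp⟩ := exists_ne q
  obtain ⟨x, rfl⟩ := HDeriv.mk_surjective p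
  refine hp (S.mk_eq_of_isUpperSet (fun a b hab ha => ?_) x)
  obtain ⟨c, hc, hbc⟩ := h b
  exact le_antisymm ((HDeriv.mk_monotone hbc).trans_eq hc)
    (ha.symm.trans_le (HDeriv.mk_monotone hab))

noncomputable def hDeriv (S : OmegaShift M) [Nontrivial (HDeriv M)] : OmegaShift (HDeriv M) where
  f := HDeriv.map S.f S.strictMono S.isUpperSet_range.ordConnected
  strictMono := HDeriv.strictMono_map _ _
  isUpperSet_range := by
    rintro _ q hq ⟨p, rfl⟩
    obtain ⟨x, rfl⟩ := HDeriv.mk_surjective p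
    obtain ⟨z, rfl⟩ := HDeriv.mk_surjective q
    rcases HDeriv.mk_le_mk.1 hq with hxz | hxz
    · obtain ⟨w, rfl⟩ := S.isUpperSet_range hxz ⟨x, rfl⟩
      exact ⟨HDeriv.mk w, rfl⟩
    · exact ⟨HDeriv.mk x, HDeriv.mk_eq_mk.2 hxz⟩
  le_apply p := by
    obtain ⟨x, rfl⟩ := HDeriv.mk_surjective p
    exact HDeriv.mk_monotone (S.le_apply x)
  exists_le_iterate p q := by
    obtain ⟨x, rfl⟩ := HDeriv.mk_surjective p
    obtain ⟨y, rfl⟩ := HDeriv.mk_surjective q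
    obtain ⟨n, hn⟩ := S.exists_le_iterate x y
    refine ⟨n, ?_⟩
    rw [HDeriv.map_iterate_mk]
    exact HDeriv.mk_monotone hn
  exists_notMem_range_iterate q := by
    obtain ⟨w, hw⟩ := S.exists_forall_lt_of_mk_eq q
    obtain ⟨n, hn⟩ := S.exists_notMem_range_iterate w
    refine ⟨n, fun ⟨p, hp⟩ => ?_⟩
    obtain ⟨x, rfl⟩ := HDeriv.mk_surjective p
    rw [HDeriv.map_iterate_mk] at hp
    exact hn (S.isUpperSet_range_iterate n (hw _ hp).le ⟨x, rfl⟩)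

theorem exists_isBot (S : OmegaShift M) [Nonempty M] (hfin : ∀ a b : M, (Icc a b).Finite) :
    ∃ m : M, IsBot m := by
  obtain ⟨u⟩ := ‹Nonempty M›
  obtain ⟨n, hn⟩ := S.exists_notMem_range_iterate u
  have hmaps : MapsTo S.f^[n] (Iio u) (Icc u (S.f^[n] u)) := fun w hw =>
    ⟨not_lt.1 fun h => hn (S.isUpperSet_range_iterate n h.le ⟨w, rfl⟩),
      ((S.strictMono.iterate n) hw).le⟩
  have hIic : (Iic u).Finite := by
    rw [← Iio_insert]
    exact (((hfin _ _).subset hmaps.image_subset).of_finite_image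
      (S.strictMono.iterate n).injective.injOn).insert u
  obtain ⟨m, hmu, hm⟩ := exists_min_image (Iic u) id hIic ⟨u, le_rfl⟩
  refine ⟨m, fun x => ?_⟩
  rcases le_total x u with hxu | hux
  · exact hm x hxu
  · exact (hmu : m ≤ u).trans hux

theorem nonempty_orderIso_nat (S : OmegaShift M) [Nonempty M] [Finite (HDeriv M)] :
    Nonempty (M ≃o ℕ) := by
  have : Nonempty (HDeriv M) := ‹Nonempty M›.map HDeriv.mk
  obtain ⟨q, hq⟩ := Finite.exists_max (id : HDeriv M → HDeriv M)
  have hall : ∀ x, HDeriv.mk x = q := S.mk_eq_of_isUpperSet fun _ _ hab ha =>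
    le_antisymm (hq _) (ha.symm.trans_le (HDeriv.mk_monotone hab))
  have hfin (a b : M) : (Icc a b).Finite :=
    (HDeriv.mk_eq_mk.1 ((hall a).trans (hall b).symm)).subset Icc_subset_uIcc
  obtain ⟨m, hm⟩ := S.exists_isBot hfin
  let := LocallyFiniteOrder.ofFiniteIcc hfin
  let := LinearLocallyFiniteOrder.succOrder M
  let := LinearLocallyFiniteOrder.predOrder M
  let : OrderBot M := { bot := m, bot_le := hm }
  have := S.noMaxOrder
  exact ⟨orderIsoNatOfLinearSuccPredArch⟩

def natLexShift (K : Type) [LinearOrder K] (x : ℕ ×ₗ K) : ℕ ×ₗ K :=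
  toLex ((ofLex x).1 + 1, (ofLex x).2)

theorem natLexShift_iterate (K : Type) [LinearOrder K] (n : ℕ) (x : ℕ ×ₗ K) :
    (natLexShift K)^[n] x = toLex ((ofLex x).1 + n, (ofLex x).2) := by
  induction n with
  | zero => rfl
  | succ n ih => rw [Function.iterate_succ_apply', ih]; rfl

def natLex (K : Type) [LinearOrder K] : OmegaShift (ℕ ×ₗ K) where
  f := natLexShift K
  strictMono a b h := by simpa [natLexShift, Prod.Lex.lt_iff] using h
  isUpperSet_range := by
    rintro _ z hz ⟨x, rfl⟩
    have hz1 : 1 ≤ (ofLex z).1 := by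
      rcases Prod.Lex.le_iff.1 hz with h | h <;> simp only [natLexShift, ofLex_toLex] at h <;> omega
    exact ⟨toLex ((ofLex z).1 - 1, (ofLex z).2), by simp [natLexShift, Nat.sub_add_cancel hz1]⟩
  le_apply x := Prod.Lex.le_iff.2 (Or.inl (by simp [natLexShift]))
  exists_le_iterate x y := ⟨(ofLex y).1 + 1, by
    rw [natLexShift_iterate]
    exact Prod.Lex.le_iff.2 (Or.inl (by simp only [ofLex_toLex]; omega))⟩
  exists_notMem_range_iterate y := ⟨(ofLex y).1 + 1, fun ⟨x, hx⟩ => by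
    have := congrArg (fun z => (ofLex z).1) hx
    simp only [natLexShift_iterate, ofLex_toLex] at this
    omega⟩

def ofOrderIso (S : OmegaShift M) (e : M ≃o N) : OmegaShift N :=
  have hiter (n : ℕ) (x : N) : (e ∘ S.f ∘ e.symm)^[n] x = e (S.f^[n] (e.symm x)) := by
    simpa using (Function.Semiconj.iterate_right (f := e) (gb := e ∘ S.f ∘ e.symm)
      (fun y => by simp) n (e.symm x)).symm
  { f := e ∘ S.f ∘ e.symm
    strictMono := e.strictMono.comp (S.strictMono.comp e.symm.strictMono)
    isUpperSet_range := by
      simpa only [range_comp, e.symm.range_eq, image_univ] using S.isUpperSet_range.image e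
    le_apply x := by simpa using e.monotone (S.le_apply (e.symm x))
    exists_le_iterate x y := by
      obtain ⟨n, hn⟩ := S.exists_le_iterate (e.symm x) (e.symm y)
      exact ⟨n, by simpa [hiter] using e.monotone hn⟩
    exists_notMem_range_iterate y := by
      obtain ⟨n, hn⟩ := S.exists_notMem_range_iterate (e.symm y)
      refine ⟨n, fun ⟨x, hx⟩ => hn ⟨e.symm x, ?_⟩⟩
      rw [hiter] at hx
      simp [← hx] }

theorem nonempty_iterDeriv (S : OmegaShift M) (n : ℕ)
    (h : ∀ k ≤ n, Nontrivial (IterDeriv M k)) : Nonempty (OmegaShift (IterDeriv M n)) := by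
  induction n with
  | zero => exact ⟨S⟩
  | succ n ih =>
    obtain ⟨T⟩ := ih fun k hk => h k (by omega)
    have : Nontrivial (HDeriv (IterDeriv M n)) := h (n + 1) le_rfl
    exact ⟨T.hDeriv⟩

end OmegaShift

def OrderIso.prodLexDual (α β : Type) [LinearOrder α] [LinearOrder β] :
    (α ×ₗ β)ᵒᵈ ≃o αᵒᵈ ×ₗ βᵒᵈ where
  toFun x := toLex (OrderDual.toDual (ofLex x.ofDual).1, OrderDual.toDual (ofLex x.ofDual).2)
  invFun x := OrderDual.toDual (toLex ((ofLex x).1.ofDual, (ofLex x).2.ofDual))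
  left_inv _ := rfl
  right_inv _ := rfl
  map_rel_iff' {a b} := by
    change toLex (_, _) ≤ toLex (_, _) ↔ b.ofDual ≤ a.ofDual
    rw [Prod.Lex.toLex_le_toLex, Prod.Lex.le_iff]
    exact or_congr Iff.rfl (and_congr eq_comm Iff.rfl)

theorem nonempty_iterDeriv_orderIso_nat {L L' : Type} [LinearOrder L] [LinearOrder L']
    (e : L ≃o ℕ ×ₗ L') (n : ℕ) (hfin : Finite (IterDeriv L (n + 1)))
    (hnt : ∀ k ≤ n, Nontrivial (IterDeriv L k)) : Nonempty (IterDeriv L n ≃o ℕ) := by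
  obtain ⟨S⟩ := ((OmegaShift.natLex L').ofOrderIso e.symm).nonempty_iterDeriv n hnt
  have : Finite (HDeriv (IterDeriv L n)) := hfin
  have := (hnt n le_rfl).to_nonempty
  exact S.nonempty_orderIso_nat

theorem nonempty_iterDeriv_orderIso_natDual {L L' : Type} [LinearOrder L] [LinearOrder L']
    (e : L ≃o ℕᵒᵈ ×ₗ L') (n : ℕ) (hfin : Finite (IterDeriv L (n + 1)))
    (hnt : ∀ k ≤ n, Nontrivial (IterDeriv L k)) : Nonempty (IterDeriv L n ≃o ℕᵒᵈ) := by
  let e' : Lᵒᵈ ≃o ℕ ×ₗ L'ᵒᵈ := e.dual.trans ((OrderIso.prodLexDual _ _).trans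
    (Prod.Lex.prodLexCongr (OrderIso.dualDual ℕ).symm (OrderIso.refl _)))
  have hfin' : Finite (IterDeriv Lᵒᵈ (n + 1)) :=
    .of_equiv _ (IterDeriv.dualIso L (n + 1)).symm.toEquiv
  have hnt' (k : ℕ) (hk : k ≤ n) : Nontrivial (IterDeriv Lᵒᵈ k) :=
    have := hnt k hk
    (IterDeriv.dualIso L k).toEquiv.nontrivial_congr.2 inferInstance
  obtain ⟨g⟩ := nonempty_iterDeriv_orderIso_nat e' n hfin' hnt'
  exact ⟨(OrderIso.dualDual _).trans ((IterDeriv.dualIso L n).symm.trans g).dual⟩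

/-- If `L` is a linear order of finite Hausdorff rank `r ≥ 1` (i.e. `L^(r)` is
finite and `L^(k)` is infinite for `k < r`) and `L ≅ ω ×ₗ L'` (resp. `ω* ×ₗ L'`),
then `L^(r-1) ≅ ω` (resp. `ω*`). -/
theorem stmt_10 (L : Type) [LinearOrder L] (r : ℕ) (hr : 1 ≤ r)
    (hfin : Finite (IterDeriv L r)) (hinf : ∀ k < r, Infinite (IterDeriv L k)) :
    (∀ (L' : Type) [LinearOrder L'], Nonempty (L ≃o (ℕ ×ₗ L')) →
      Nonempty (IterDeriv L (r - 1) ≃o ℕ)) ∧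
    (∀ (L' : Type) [LinearOrder L'], Nonempty (L ≃o (ℕᵒᵈ ×ₗ L')) →
      Nonempty (IterDeriv L (r - 1) ≃o ℕᵒᵈ)) := by
  obtain ⟨n, rfl⟩ : ∃ n, r = n + 1 := ⟨r - 1, by omega⟩
  have hnt (k : ℕ) (hk : k ≤ n) : Nontrivial (IterDeriv L k) :=
    have := hinf k (by omega)
    inferInstance
  rw [Nat.add_sub_cancel]
  exact ⟨fun _ _ ⟨e⟩ => nonempty_iterDeriv_orderIso_nat e n hfin hnt,
    fun _ _ ⟨e⟩ => nonempty_iterDeriv_orderIso_natDual e n hfin hnt⟩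
end

section
/- If L ∈ LO_fp is finitely presented and L = L₁ + L₂ with L₁, L₂ nonempty, then L₁ and L₂ are finitely presented. -/
/-- The class of finitely presented linear orders: the smallest
isomorphism-closed class containing `0` and `1` and closed under binary ordered
sums and the operations `L ↦ ω ×ₗ L` and `L ↦ ω* ×ₗ L`
(here `ℕ ×ₗ A = ∑_{n∈ω} A` and `ℕᵒᵈ ×ₗ A = ∑_{n∈ω*} A`). -/
inductive IsFP : (L : Type) → [_inst : LinearOrder L] → Prop where
  | zero : IsFP (Fin 0)
  | one : IsFP (Fin 1)
  | iso {A B : Type} [LinearOrder A] [LinearOrder B] :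
      IsFP A → Nonempty (A ≃o B) → IsFP B
  | sum {A B : Type} [LinearOrder A] [LinearOrder B] :
      IsFP A → IsFP B → IsFP (A ⊕ₗ B)
  | omega {A : Type} [LinearOrder A] : IsFP A → IsFP (ℕ ×ₗ A)
  | omegaStar {A : Type} [LinearOrder A] : IsFP A → IsFP (ℕᵒᵈ ×ₗ A)

/-!
By induction on the derivation of `IsFP`, every cut (a lower set and its complement) of a
finitely presented order has finitely presented pieces. A cut of `A + B` restricts to cuts of
`A` and of `B`. A proper cut of `ω·B` lies within the first `n` copies of `B`; splitting off the
first copy via `ω·B ≅ B + ω·B` and inducting on `n` reduces it to a cut of `B`. The case `ω*·B`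
is the order dual of `ω·Bᵒᵈ`, and the class is closed under order duals.
-/

open Set OrderDual

variable {α β : Type*}

def OrderIso.restrictPreimage [LE α] [LE β] (e : α ≃o β) (s : Set β) : e ⁻¹' s ≃o s where
  toEquiv := e.toEquiv.subtypeEquiv fun _ => Iff.rfl
  map_rel_iff' := e.le_iff_le

def OrderIso.subtypeSumLex [LE α] [LE β] (s : Set (α ⊕ₗ β)) :
    s ≃o {a | toLex (Sum.inl a) ∈ s} ⊕ₗ {b | toLex (Sum.inr b) ∈ s} where
  toEquiv := (Equiv.subtypeSum (p := fun c => toLex c ∈ s)).trans toLex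
  map_rel_iff' := by
    rintro ⟨a | a, ha⟩ ⟨b | b, hb⟩
    · exact (Sum.Lex.inl_le_inl_iff.trans Subtype.mk_le_mk).trans Sum.Lex.inl_le_inl_iff.symm
    · exact iff_of_true (Sum.Lex.inl_le_inr _ _) (Sum.Lex.inl_le_inr _ _)
    · exact iff_of_false Sum.Lex.not_inr_le_inl Sum.Lex.not_inr_le_inl
    · exact (Sum.Lex.inr_le_inr_iff.trans Subtype.mk_le_mk).trans Sum.Lex.inr_le_inr_iff.symm

def OrderIso.subtypeDual [LE α] (s : Set αᵒᵈ) : s ≃o (↥(toDual ⁻¹' s : Set α))ᵒᵈ where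
  toEquiv := Equiv.refl _
  map_rel_iff' := by intros; exact Iff.rfl

def Prod.Lex.prodLexDualDistrib (α β : Type*) [Preorder α] [Preorder β] :
    (α ×ₗ β)ᵒᵈ ≃o αᵒᵈ ×ₗ βᵒᵈ where
  toEquiv := Equiv.refl _
  map_rel_iff' {x y} := by
    change _ ↔ ofDual y ≤ ofDual x
    simp only [Prod.Lex.le_iff]
    exact or_congr Iff.rfl (and_congr eq_comm Iff.rfl)

noncomputable def OrderIso.unitSumLexNat : Unit ⊕ₗ ℕ ≃o ℕ :=
  StrictMono.orderIsoOfSurjective (fun x => Sum.elim (fun _ => 0) Nat.succ (ofLex x))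
    (by
      rintro (_ | a) (_ | b) h
      · exact absurd (Sum.Lex.inl_lt_inl_iff.1 h) (lt_irrefl _)
      · exact Nat.succ_pos b
      · exact absurd h Sum.Lex.not_inr_lt_inl
      · exact Nat.succ_lt_succ (Sum.Lex.inr_lt_inr_iff.1 h))
    (by rintro (_ | n); exacts [⟨toLex (.inl ()), rfl⟩, ⟨toLex (.inr n), rfl⟩])

/-- `B + ω·B ≅ ω·B`, sending `inl b` to `(0, b)` and `inr (n, b)` to `(n + 1, b)`
definitionally. -/
noncomputable def Prod.Lex.sumLexNatLex (β : Type*) [Preorder β] : β ⊕ₗ ℕ ×ₗ β ≃o ℕ ×ₗ β :=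
  ((OrderIso.sumLexCongr (Prod.Lex.uniqueProd Unit β).symm (OrderIso.refl _)).trans
    (Prod.Lex.sumLexProdLexDistrib Unit ℕ β).symm).trans
    (Prod.Lex.prodLexCongr OrderIso.unitSumLexNat (OrderIso.refl β))

namespace IsFP

variable {A B : Type} [LinearOrder A] [LinearOrder B]

theorem of_subsingleton [Subsingleton A] : IsFP A := by
  rcases isEmpty_or_nonempty A with _ | ⟨⟨a⟩⟩
  · exact zero.iso ⟨OrderIso.ofIsEmpty _ _⟩
  · have : Unique A := uniqueOfSubsingleton a
    exact one.iso ⟨OrderIso.ofUnique _ _⟩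

theorem dual (h : IsFP A) : IsFP Aᵒᵈ := by
  induction h with
  | zero | one => exact of_subsingleton
  | iso _ e ih => exact ih.iso ⟨e.some.dual⟩
  | sum _ _ ihA ihB => exact (ihB.sum ihA).iso ⟨(OrderIso.sumLexDualAntidistrib _ _).symm⟩
  | omega _ ih => exact ih.omegaStar.iso ⟨(Prod.Lex.prodLexDualDistrib _ _).symm⟩
  | omegaStar _ ih =>
    exact ih.omega.iso ⟨(Prod.Lex.prodLexCongr (OrderIso.dualDual ℕ) (.refl _)).trans
      (Prod.Lex.prodLexDualDistrib _ _).symm⟩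

theorem subtype_sumLex {s : Set (A ⊕ₗ B)} (hA : IsFP {a | toLex (Sum.inl a) ∈ s})
    (hB : IsFP {b | toLex (Sum.inr b) ∈ s}) : IsFP s :=
  (hA.sum hB).iso ⟨(OrderIso.subtypeSumLex s).symm⟩

end IsFP

def IsFPCut {A : Type} [LinearOrder A] (s : Set A) : Prop := IsFP s ∧ IsFP ↥sᶜ

def HasFPCuts (A : Type) [LinearOrder A] : Prop := ∀ s : Set A, IsLowerSet s → IsFPCut s

section

variable {A B : Type} [LinearOrder A] [LinearOrder B]

theorem isFPCut_empty (h : IsFP A) : IsFPCut (∅ : Set A) :=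
  ⟨.of_subsingleton, (compl_empty (α := A)) ▸ h.iso ⟨OrderIso.Set.univ.symm⟩⟩

theorem isFPCut_univ (h : IsFP A) : IsFPCut (univ : Set A) :=
  ⟨h.iso ⟨OrderIso.Set.univ.symm⟩, (compl_univ (α := A)) ▸ .of_subsingleton⟩

theorem IsFPCut.of_orderIso (e : A ≃o B) {s : Set B} (h : IsFPCut (e ⁻¹' s)) : IsFPCut s :=
  ⟨h.1.iso ⟨e.restrictPreimage s⟩, h.2.iso ⟨e.restrictPreimage sᶜ⟩⟩

theorem IsFPCut.sumLex {s : Set (A ⊕ₗ B)} (hA : IsFPCut {a | toLex (Sum.inl a) ∈ s})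
    (hB : IsFPCut {b | toLex (Sum.inr b) ∈ s}) : IsFPCut s :=
  ⟨.subtype_sumLex hA.1 hB.1, .subtype_sumLex (s := sᶜ) hA.2 hB.2⟩

namespace HasFPCuts

theorem isFP (h : HasFPCuts A) : IsFP A :=
  (h univ isLowerSet_univ).1.iso ⟨OrderIso.Set.univ⟩

theorem of_orderIso (e : A ≃o B) (h : HasFPCuts A) : HasFPCuts B := fun _ hs =>
  (h _ (hs.preimage e.monotone)).of_orderIso e

theorem of_subsingleton [Subsingleton A] : HasFPCuts A := fun _ _ =>
  ⟨.of_subsingleton, .of_subsingleton⟩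

theorem sumLex (hA : HasFPCuts A) (hB : HasFPCuts B) : HasFPCuts (A ⊕ₗ B) := fun _ hs =>
  .sumLex (hA _ (hs.preimage Sum.Lex.inl_mono)) (hB _ (hs.preimage Sum.Lex.inr_mono))

theorem dual (h : HasFPCuts A) : HasFPCuts Aᵒᵈ := fun s hs =>
  have hcut := h _ (isUpperSet_preimage_toDual_iff.2 hs).compl
  ⟨(compl_compl (toDual ⁻¹' s) ▸ hcut.2).dual.iso ⟨(OrderIso.subtypeDual s).symm⟩,
    hcut.1.dual.iso ⟨(OrderIso.subtypeDual sᶜ).symm⟩⟩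

theorem isFPCut_lexNat_of_bounded (h : HasFPCuts B) (n : ℕ) {s : Set (ℕ ×ₗ B)}
    (hs : IsLowerSet s) (hbound : ∀ x ∈ s, (ofLex x).1 < n) : IsFPCut s := by
  induction n generalizing s with
  | zero =>
    rw [eq_empty_of_forall_notMem fun x hx => (hbound x hx).not_ge (Nat.zero_le _)]
    exact isFPCut_empty h.isFP.omega
  | succ n ih =>
    have hmono := (Prod.Lex.sumLexNatLex B).monotone
    refine .of_orderIso (Prod.Lex.sumLexNatLex B) (.sumLex ?_ ?_)
    · exact h _ (hs.preimage (hmono.comp Sum.Lex.inl_mono))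
    · exact ih (hs.preimage (hmono.comp Sum.Lex.inr_mono))
        fun x hx => Nat.lt_of_succ_lt_succ (hbound _ hx)

theorem lexNat (h : HasFPCuts B) : HasFPCuts (ℕ ×ₗ B) := by
  intro s hs
  rcases eq_or_ne s univ with rfl | hsu
  · exact isFPCut_univ h.isFP.omega
  obtain ⟨x, hx⟩ := (ne_univ_iff_exists_notMem s).1 hsu
  refine h.isFPCut_lexNat_of_bounded ((ofLex x).1 + 1) hs fun y hy => Nat.lt_succ_of_le ?_
  exact Prod.Lex.monotone_fst_ofLex (le_of_not_ge fun hxy => hx (hs hxy hy))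

theorem lexNatDual (h : HasFPCuts B) : HasFPCuts (ℕᵒᵈ ×ₗ B) :=
  h.dual.lexNat.dual.of_orderIso <|
    (Prod.Lex.prodLexDualDistrib _ _).trans
      (Prod.Lex.prodLexCongr (.refl _) (OrderIso.dualDual B).symm)

end HasFPCuts

theorem IsFP.hasFPCuts (h : IsFP A) : HasFPCuts A := by
  induction h with
  | zero | one => exact .of_subsingleton
  | iso _ e ih => exact ih.of_orderIso e.some
  | sum _ _ ihA ihB => exact ihA.sumLex ihB
  | omega _ ih => exact ih.lexNat
  | omegaStar _ ih => exact ih.lexNatDual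

theorem isLowerSet_range_toLex_inl : IsLowerSet (range (toLex ∘ Sum.inl : A → A ⊕ₗ B)) := by
  rintro x (y | y) hyx ⟨a, rfl⟩
  · exact ⟨y, rfl⟩
  · exact absurd hyx Sum.Lex.not_inr_le_inl

end

theorem stmt_14_general (L₁ L₂ : Type) [LinearOrder L₁] [LinearOrder L₂]
    (h : IsFP (L₁ ⊕ₗ L₂)) :
    IsFP L₁ ∧ IsFP L₂ := by
  obtain ⟨h₁, h₂⟩ := h.hasFPCuts _ isLowerSet_range_toLex_inl
  have hcompl : (range (toLex ∘ Sum.inl : L₁ → L₁ ⊕ₗ L₂))ᶜ = range (toLex ∘ Sum.inr) :=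
    compl_range_inl
  exact ⟨h₁.iso ⟨(Sum.Lex.inl_strictMono.orderIso _).symm⟩,
    h₂.iso ⟨(OrderIso.setCongr _ _ hcompl).trans (Sum.Lex.inr_strictMono.orderIso _).symm⟩⟩

/-- If a finitely presented linear order is a sum `L₁ + L₂` of two nonempty
linear orders, then both summands are finitely presented. -/
theorem stmt_14 (L₁ L₂ : Type) [LinearOrder L₁] [LinearOrder L₂]
    (h : IsFP (L₁ ⊕ₗ L₂)) (h₁ : Nonempty L₁) (h₂ : Nonempty L₂) :
    IsFP L₁ ∧ IsFP L₂ :=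
  stmt_14_general L₁ L₂ h
end
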